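/- Suppose u : V → ℝ is such that for every triangle t ∈ T the lengths ℓ̃ = e^{λ̃/2} on its three edges satisfy the strict triangle inequalities. Then for every w : V → ℝ the second derivative Q(w) of s ↦ E(u + s·w) at s = 0 satisfies Q(w) ≥ 0. If, moreover, every vertex of V belongs to at least one triangle and the graph on V in which i and j are adjacent whenever they are both vertices of a common triangle is connected, then Q(w) = 0 if and only if w is constant; in other words, the Hessian of E at u is positive semidefinite with one-dimensional kernel consisting of the constant functions. -/

import Mathlib

open Real Finset

/-- Milnor's Lobachevsky function. -/
noncomputable def Lob (x : ℝ) : ℝ := -∫ t in (0:ℝ)..x, Real.log |2 * Real.sin t|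

/-- Angle opposite the side of length `a` in a euclidean triangle with side
lengths `a`, `b`, `c`, given by the arccos formula (which, since `Real.arccos`
clamps, also implements the broken-triangle convention). -/
noncomputable def eang (a b c : ℝ) : ℝ := Real.arccos ((b^2 + c^2 - a^2) / (2*b*c))

/-- The extended triangle function `f`. -/
noncomputable def fTri (p : ℝ × ℝ × ℝ) : ℝ :=
  eang (Real.exp p.1) (Real.exp p.2.1) (Real.exp p.2.2) * p.1 +
  eang (Real.exp p.2.1) (Real.exp p.2.2) (Real.exp p.1) * p.2.1 +
  eang (Real.exp p.2.2) (Real.exp p.1) (Real.exp p.2.1) * p.2.2 +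
  Lob (eang (Real.exp p.1) (Real.exp p.2.1) (Real.exp p.2.2)) +
  Lob (eang (Real.exp p.2.1) (Real.exp p.2.2) (Real.exp p.1)) +
  Lob (eang (Real.exp p.2.2) (Real.exp p.1) (Real.exp p.2.1))

/-- The modified logarithmic lengths `λ̃_{ij} = λ_{ij} + u_i + u_j`. -/
def lamT {V : Type*} (lam : V → V → ℝ) (u : V → ℝ) (i j : V) : ℝ :=
  lam i j + u i + u j

/-- The modified lengths `ℓ̃_{ij} = e^{λ̃_{ij}/2}`. -/
noncomputable def ellT {V : Type*} (lam : V → V → ℝ) (u : V → ℝ) (i j : V) : ℝ :=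
  Real.exp (lamT lam u i j / 2)

/-- The angle at the vertex `i` in the euclidean triangle `ijk` with side
lengths `ℓ̃_{ij}, ℓ̃_{jk}, ℓ̃_{ki}` (extended by the broken-triangle convention). -/
noncomputable def angAt {V : Type*} (lam : V → V → ℝ) (u : V → ℝ) (i j k : V) : ℝ :=
  eang (ellT lam u j k) (ellT lam u k i) (ellT lam u i j)

/-- The function `E_{T,Θ,λ}(u)` of the first variational principle. -/
noncomputable def Efun {V T : Type*} [Fintype V] [Fintype T]
    (tv : T → V × V × V) (lam : V → V → ℝ) (Θ : V → ℝ) (u : V → ℝ) : ℝ :=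
  (∑ t : T,
    (2 * fTri (lamT lam u (tv t).1 (tv t).2.1 / 2,
               lamT lam u (tv t).2.1 (tv t).2.2 / 2,
               lamT lam u (tv t).2.2 (tv t).1 / 2)
      - (π/2) * (lamT lam u (tv t).1 (tv t).2.1
               + lamT lam u (tv t).2.1 (tv t).2.2
               + lamT lam u (tv t).2.2 (tv t).1)))
  + ∑ i : V, Θ i * u i

/-!
Along a line `s ↦ u + s • w` each triangle moves its half log-lengths `x, y, z` with constant
velocities `v`, the half-sums of `w` over its edges. The gradient of `f` is the triple of angles
(the Lobachevsky terms cancel because the angles sum to `π`), so the second derivative of `E` is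
a sum over triangles of `2 ∑ dα_i v_i`. With `H` sixteen times the squared area,
`2 a² √H ∑ dα_i v_i = (2a²(v₁ - v₃) - (a² + b² - c²)(v₂ - v₃))² + H (v₂ - v₃)²`,
which is nonnegative and vanishes exactly when `v₁ = v₂ = v₃`, i.e. when `w` is constant on
the triangle. Connectedness of the vertex graph propagates this to all of `V`.
-/

def TriangleIneqs (a b c : ℝ) : Prop := a < b + c ∧ b < c + a ∧ c < a + b

lemma TriangleIneqs.rotate {a b c : ℝ} (h : TriangleIneqs a b c) : TriangleIneqs b c a :=
  ⟨h.2.1, h.2.2, h.1⟩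

/-- Sixteen times the squared area of a triangle with side lengths `a, b, c` (Heron). -/
def heron (a b c : ℝ) : ℝ := (a + b + c) * (b + c - a) * (a + b - c) * (a - b + c)

lemma heron_rotate (a b c : ℝ) : heron b c a = heron a b c := by unfold heron; ring

lemma heron_pos {a b c : ℝ} (ha : 0 < a) (h : TriangleIneqs a b c) : 0 < heron a b c := by
  obtain ⟨h₁, h₂, h₃⟩ := h
  unfold heron
  have : 0 < a + b + c := by linarith
  exact mul_pos (mul_pos (mul_pos this (by linarith)) (by linarith)) (by linarith)

lemma one_sub_sq_cosine_ratio {a b c : ℝ} (hb : b ≠ 0) (hc : c ≠ 0) :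
    1 - ((b ^ 2 + c ^ 2 - a ^ 2) / (2 * b * c)) ^ 2 = heron a b c / (2 * b * c) ^ 2 := by
  unfold heron; field_simp; ring

lemma abs_cosine_ratio_lt_one {a b c : ℝ} (ha : 0 < a) (hb : 0 < b) (hc : 0 < c)
    (h : TriangleIneqs a b c) : |(b ^ 2 + c ^ 2 - a ^ 2) / (2 * b * c)| < 1 := by
  rw [← sq_lt_one_iff_abs_lt_one, ← sub_pos, one_sub_sq_cosine_ratio hb.ne' hc.ne']
  exact div_pos (heron_pos ha h) (by positivity)

lemma sin_eang {a b c : ℝ} (hb : 0 < b) (hc : 0 < c) :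
    sin (eang a b c) = √(heron a b c) / (2 * b * c) := by
  rw [eang, sin_arccos, one_sub_sq_cosine_ratio hb.ne' hc.ne', sqrt_div' _ (by positivity),
    sqrt_sq (by positivity)]

lemma eang_mem_Ioo {a b c : ℝ} (ha : 0 < a) (hb : 0 < b) (hc : 0 < c)
    (h : TriangleIneqs a b c) : eang a b c ∈ Set.Ioo 0 π := by
  obtain ⟨h₁, h₂⟩ := abs_lt.1 (abs_cosine_ratio_lt_one ha hb hc h)
  exact ⟨arccos_pos.2 h₂, arccos_lt_pi.2 h₁⟩

lemma log_two_mul_sin_eang {a b c : ℝ} (ha : 0 < a) (hb : 0 < b) (hc : 0 < c)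
    (h : TriangleIneqs a b c) :
    log (2 * sin (eang a b c)) = log √(heron a b c) - log b - log c := by
  have hH : 0 < √(heron a b c) := sqrt_pos.2 (heron_pos ha h)
  rw [sin_eang hb hc, show 2 * (√(heron a b c) / (2 * b * c)) = √(heron a b c) / (b * c) by
    field_simp, log_div hH.ne' (by positivity), log_mul hb.ne' hc.ne']
  ring

lemma hasDerivAt_Lob {θ : ℝ} (hθ : θ ∈ Set.Ioo 0 π) :
    HasDerivAt Lob (-log (2 * sin θ)) θ := by
  have hsin : 0 < 2 * sin θ := by linarith [sin_pos_of_pos_of_lt_pi hθ.1 hθ.2]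
  have hint : IntervalIntegrable (fun t => log |2 * sin t|) MeasureTheory.volume 0 θ :=
    (analyticOnNhd_const.mul analyticOnNhd_sin).meromorphicOn.intervalIntegrable_log_norm
  have hmeas : Measurable fun t => log |2 * sin t| := by fun_prop
  have hderiv := (intervalIntegral.integral_hasDerivAt_right hint
    hmeas.stronglyMeasurable.stronglyMeasurableAtFilter
    (by fun_prop (disch := exact (abs_pos.2 hsin.ne').ne'))).neg
  rwa [abs_of_pos hsin] at hderiv

/-- The derivative of `eang a b c` when `log a, log b, log c` move with velocities `x', y', z'`. -/
noncomputable def eangDeriv (a b c x' y' z' : ℝ) : ℝ :=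
  (2 * a ^ 2 * x' - (a ^ 2 + b ^ 2 - c ^ 2) * y' - (a ^ 2 + c ^ 2 - b ^ 2) * z') / √(heron a b c)

theorem HasDerivAt.eang_exp {x y z : ℝ → ℝ} {x' y' z' s : ℝ} (hx : HasDerivAt x x' s)
    (hy : HasDerivAt y y' s) (hz : HasDerivAt z z' s)
    (h : TriangleIneqs (rexp (x s)) (rexp (y s)) (rexp (z s))) :
    HasDerivAt (fun s => eang (rexp (x s)) (rexp (y s)) (rexp (z s)))
      (eangDeriv (rexp (x s)) (rexp (y s)) (rexp (z s)) x' y' z') s := by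
  have ha := Real.exp_pos (x s)
  have hb := Real.exp_pos (y s)
  have hc := Real.exp_pos (z s)
  have hratio := (((hy.exp.fun_pow 2).fun_add (hz.exp.fun_pow 2)).fun_sub
    (hx.exp.fun_pow 2)).fun_div ((hy.exp.const_mul 2).fun_mul hz.exp) (by positivity)
  obtain ⟨h₁, h₂⟩ := abs_lt.1 (abs_cosine_ratio_lt_one ha hb hc h)
  refine ((hasDerivAt_arccos h₁.ne' h₂.ne).comp s hratio).congr_deriv ?_
  rw [one_sub_sq_cosine_ratio hb.ne' hc.ne', sqrt_div' _ (by positivity),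
    sqrt_sq (by positivity), eangDeriv]
  have hH : 0 < √(heron (rexp (x s)) (rexp (y s)) (rexp (z s))) := sqrt_pos.2 (heron_pos ha h)
  field_simp
  ring

lemma eangDeriv_add_eangDeriv_add_eangDeriv (a b c x' y' z' : ℝ) :
    eangDeriv a b c x' y' z' + eangDeriv b c a y' z' x' + eangDeriv c a b z' x' y' = 0 := by
  rw [eangDeriv, eangDeriv, eangDeriv, heron_rotate a b c, ← heron_rotate c a b]
  ring

theorem HasDerivAt.fTri {x y z : ℝ → ℝ} {x' y' z' s : ℝ} (hx : HasDerivAt x x' s)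
    (hy : HasDerivAt y y' s) (hz : HasDerivAt z z' s)
    (h : TriangleIneqs (rexp (x s)) (rexp (y s)) (rexp (z s))) :
    HasDerivAt (fun s => fTri (x s, y s, z s))
      (eang (rexp (x s)) (rexp (y s)) (rexp (z s)) * x'
        + eang (rexp (y s)) (rexp (z s)) (rexp (x s)) * y'
        + eang (rexp (z s)) (rexp (x s)) (rexp (y s)) * z') s := by
  have ha := Real.exp_pos (x s)
  have hb := Real.exp_pos (y s)
  have hc := Real.exp_pos (z s)
  have hα := hx.eang_exp hy hz h
  have hβ := hy.eang_exp hz hx h.rotate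
  have hγ := hz.eang_exp hx hy h.rotate.rotate
  have hLα := (hasDerivAt_Lob (eang_mem_Ioo ha hb hc h)).comp s hα
  have hLβ := (hasDerivAt_Lob (eang_mem_Ioo hb hc ha h.rotate)).comp s hβ
  have hLγ := (hasDerivAt_Lob (eang_mem_Ioo hc ha hb h.rotate.rotate)).comp s hγ
  refine (((((hα.fun_mul hx).fun_add (hβ.fun_mul hy)).fun_add (hγ.fun_mul hz)).fun_add
    hLα).fun_add hLβ |>.fun_add hLγ).congr_deriv ?_
  rw [log_two_mul_sin_eang ha hb hc h, log_two_mul_sin_eang hb hc ha h.rotate,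
    log_two_mul_sin_eang hc ha hb h.rotate.rotate, heron_rotate (rexp (x s)),
    ← heron_rotate (rexp (z s)),
    Real.log_exp, Real.log_exp, Real.log_exp]
  linear_combination (x s + y s + z s - Real.log √(heron (rexp (x s)) (rexp (y s)) (rexp (z s)))) *
    eangDeriv_add_eangDeriv_add_eangDeriv (rexp (x s)) (rexp (y s)) (rexp (z s)) x' y' z'

/-- The Hessian of `fTri` at `(log a, log b, log c)`, evaluated on `(v₁, v₂, v₃)`. -/
noncomputable def angleHessian (a b c v₁ v₂ v₃ : ℝ) : ℝ :=
  eangDeriv a b c v₁ v₂ v₃ * v₁ + eangDeriv b c a v₂ v₃ v₁ * v₂ + eangDeriv c a b v₃ v₁ v₂ * v₃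

lemma two_mul_sq_mul_sqrt_heron_mul_angleHessian {a b c : ℝ} (hH : 0 < heron a b c)
    (v₁ v₂ v₃ : ℝ) :
    2 * a ^ 2 * √(heron a b c) * angleHessian a b c v₁ v₂ v₃ =
      (2 * a ^ 2 * (v₁ - v₃) - (a ^ 2 + b ^ 2 - c ^ 2) * (v₂ - v₃)) ^ 2
        + heron a b c * (v₂ - v₃) ^ 2 := by
  have : 0 < √(heron a b c) := sqrt_pos.2 hH
  rw [angleHessian, eangDeriv, eangDeriv, eangDeriv, heron_rotate a b c, ← heron_rotate c a b]
  field_simp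
  unfold heron
  ring

lemma angleHessian_nonneg {a b c : ℝ} (ha : a ≠ 0) (hH : 0 < heron a b c) (v₁ v₂ v₃ : ℝ) :
    0 ≤ angleHessian a b c v₁ v₂ v₃ := by
  have hpos : 0 < 2 * a ^ 2 * √(heron a b c) := by positivity
  have := two_mul_sq_mul_sqrt_heron_mul_angleHessian hH v₁ v₂ v₃
  rw [← mul_nonneg_iff_of_pos_left hpos, this]
  positivity

lemma angleHessian_eq_zero_iff {a b c : ℝ} (ha : a ≠ 0) (hH : 0 < heron a b c)
    {v₁ v₂ v₃ : ℝ} : angleHessian a b c v₁ v₂ v₃ = 0 ↔ v₁ = v₂ ∧ v₂ = v₃ := by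
  have hpos : 0 < 2 * a ^ 2 * √(heron a b c) := by positivity
  rw [← mul_eq_zero_iff_left hpos.ne', two_mul_sq_mul_sqrt_heron_mul_angleHessian hH,
    add_eq_zero_iff_of_nonneg (sq_nonneg _) (by positivity), mul_eq_zero_iff_left hH.ne',
    sq_eq_zero_iff, sq_eq_zero_iff, sub_eq_zero (a := v₂)]
  constructor
  · rintro ⟨h₁, rfl⟩
    exact ⟨by simpa [ha, sub_eq_zero] using h₁, rfl⟩
  · rintro ⟨rfl, rfl⟩
    simp

open Topology

section Energy

variable {V : Type*} (lam : V → V → ℝ)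

noncomputable def triEnergy (u : V → ℝ) (i j k : V) : ℝ :=
  2 * fTri (lamT lam u i j / 2, lamT lam u j k / 2, lamT lam u k i / 2)
    - (π / 2) * (lamT lam u i j + lamT lam u j k + lamT lam u k i)

-- `angAt lam u k i j` is the angle opposite the edge `ij`.
noncomputable def triEnergyDeriv (u w : V → ℝ) (i j k : V) : ℝ :=
  2 * (angAt lam u k i j * ((w i + w j) / 2) + angAt lam u i j k * ((w j + w k) / 2)
      + angAt lam u j k i * ((w k + w i) / 2))
    - (π / 2) * ((w i + w j) + (w j + w k) + (w k + w i))

lemma ellT_pos (u : V → ℝ) (i j : V) : 0 < ellT lam u i j := Real.exp_pos _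

lemma hasDerivAt_lamT_line (u w : V → ℝ) (i j : V) (s : ℝ) :
    HasDerivAt (fun s => lamT lam (u + s • w) i j) (w i + w j) s := by
  have : (fun s => lamT lam (u + s • w) i j) = fun s => lamT lam u i j + s * (w i + w j) := by
    funext s
    simp only [lamT, Pi.add_apply, Pi.smul_apply, smul_eq_mul]
    ring
  rw [this]
  simpa using ((hasDerivAt_id s).mul_const (w i + w j)).const_add (lamT lam u i j)

variable {lam}

lemma hasDerivAt_triEnergy_line {u w : V → ℝ} {i j k : V} {s : ℝ}
    (h : TriangleIneqs (ellT lam (u + s • w) i j) (ellT lam (u + s • w) j k)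
      (ellT lam (u + s • w) k i)) :
    HasDerivAt (fun s => triEnergy lam (u + s • w) i j k)
      (triEnergyDeriv lam (u + s • w) w i j k) s := by
  have hij := hasDerivAt_lamT_line lam u w i j s
  have hjk := hasDerivAt_lamT_line lam u w j k s
  have hki := hasDerivAt_lamT_line lam u w k i s
  exact (((hij.div_const 2).fTri (hjk.div_const 2) (hki.div_const 2) h).const_mul 2).sub
    (((hij.add hjk).add hki).const_mul (π / 2))

lemma hasDerivAt_triEnergyDeriv_line {u w : V → ℝ} {i j k : V} {s : ℝ}
    (h : TriangleIneqs (ellT lam (u + s • w) i j) (ellT lam (u + s • w) j k)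
      (ellT lam (u + s • w) k i)) :
    HasDerivAt (fun s => triEnergyDeriv lam (u + s • w) w i j k)
      (2 * angleHessian (ellT lam (u + s • w) i j) (ellT lam (u + s • w) j k)
        (ellT lam (u + s • w) k i) ((w i + w j) / 2) ((w j + w k) / 2) ((w k + w i) / 2)) s := by
  have hij := (hasDerivAt_lamT_line lam u w i j s).div_const 2
  have hjk := (hasDerivAt_lamT_line lam u w j k s).div_const 2
  have hki := (hasDerivAt_lamT_line lam u w k i s).div_const 2
  exact (((((hij.eang_exp hjk hki h).mul_const _).add
    ((hjk.eang_exp hki hij h.rotate).mul_const _)).add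
    ((hki.eang_exp hij hjk h.rotate.rotate).mul_const _)).const_mul 2).sub_const _

end Energy

section Efun

variable {V T : Type*} (tv : T → V × V × V) (lam : V → V → ℝ)

def triangleDomain : Set (V → ℝ) :=
  {u | ∀ t, TriangleIneqs (ellT lam u (tv t).1 (tv t).2.1) (ellT lam u (tv t).2.1 (tv t).2.2)
    (ellT lam u (tv t).2.2 (tv t).1)}

lemma isOpen_triangleDomain [Finite T] : IsOpen (triangleDomain tv lam) := by
  have hcont : ∀ i j, Continuous fun u => ellT lam u i j := by
    intro i j
    unfold ellT lamT
    fun_prop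
  simp only [triangleDomain, TriangleIneqs, Set.ofPred_forall]
  refine isOpen_iInter_of_finite fun t => ?_
  exact ((isOpen_lt (hcont _ _) ((hcont _ _).add (hcont _ _))).inter
    ((isOpen_lt (hcont _ _) ((hcont _ _).add (hcont _ _))).inter
      (isOpen_lt (hcont _ _) ((hcont _ _).add (hcont _ _)))))

noncomputable def energyHessian [Fintype T] (u w : V → ℝ) : ℝ :=
  ∑ t, 2 * angleHessian (ellT lam u (tv t).1 (tv t).2.1) (ellT lam u (tv t).2.1 (tv t).2.2)
    (ellT lam u (tv t).2.2 (tv t).1) ((w (tv t).1 + w (tv t).2.1) / 2)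
    ((w (tv t).2.1 + w (tv t).2.2) / 2) ((w (tv t).2.2 + w (tv t).1) / 2)

variable {tv lam}

lemma hasDerivAt_Efun_line [Fintype V] [Fintype T] (Θ : V → ℝ) {u w : V → ℝ} {s : ℝ}
    (hu : u + s • w ∈ triangleDomain tv lam) :
    HasDerivAt (fun s : ℝ => Efun tv lam Θ (u + s • w))
      ((∑ t, triEnergyDeriv lam (u + s • w) w (tv t).1 (tv t).2.1 (tv t).2.2)
        + ∑ i, Θ i * w i) s := by
  refine (HasDerivAt.fun_sum fun t _ => hasDerivAt_triEnergy_line (hu t)).add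
    (HasDerivAt.fun_sum fun i _ => ?_)
  simpa using (((hasDerivAt_id s).mul_const (w i)).const_add (u i)).const_mul (Θ i)

lemma hasDerivAt_deriv_Efun_line [Fintype V] [Fintype T] (Θ : V → ℝ) {u : V → ℝ}
    (hu : u ∈ triangleDomain tv lam) (w : V → ℝ) :
    HasDerivAt (deriv fun s : ℝ => Efun tv lam Θ (u + s • w)) (energyHessian tv lam u w) 0 := by
  unfold energyHessian
  have hline : ∀ᶠ s in 𝓝 (0 : ℝ), u + s • w ∈ triangleDomain tv lam := by
    refine (Continuous.tendsto (by fun_prop) (0 : ℝ)).eventually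
      ((isOpen_triangleDomain tv lam).mem_nhds ?_)
    simpa using hu
  have hderiv : (deriv fun s : ℝ => Efun tv lam Θ (u + s • w)) =ᶠ[𝓝 0] fun s =>
      (∑ t, triEnergyDeriv lam (u + s • w) w (tv t).1 (tv t).2.1 (tv t).2.2)
        + ∑ i, Θ i * w i :=
    hline.mono fun s hs => (hasDerivAt_Efun_line Θ hs).deriv
  refine (HasDerivAt.add_const _ (HasDerivAt.fun_sum fun t _ => ?_)).congr_of_eventuallyEq
    hderiv
  simpa using hasDerivAt_triEnergyDeriv_line (s := 0) (w := w) (by simpa using hu t)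

lemma energyHessian_nonneg [Fintype T] {u : V → ℝ} (hu : u ∈ triangleDomain tv lam)
    (w : V → ℝ) : 0 ≤ energyHessian tv lam u w :=
  Finset.sum_nonneg fun t _ => mul_nonneg zero_le_two <|
    angleHessian_nonneg (ellT_pos ..).ne' (heron_pos (ellT_pos ..) (hu t)) _ _ _

lemma energyHessian_eq_zero_iff [Fintype T] {u : V → ℝ} (hu : u ∈ triangleDomain tv lam)
    {w : V → ℝ} : energyHessian tv lam u w = 0 ↔
      ∀ t, w (tv t).1 = w (tv t).2.1 ∧ w (tv t).2.1 = w (tv t).2.2 := by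
  rw [energyHessian, Finset.sum_eq_zero_iff_of_nonneg fun t _ => mul_nonneg zero_le_two <|
    angleHessian_nonneg (ellT_pos ..).ne' (heron_pos (ellT_pos ..) (hu t)) _ _ _]
  simp only [Finset.mem_univ, true_imp_iff]
  refine forall_congr' fun t => ?_
  rw [mul_eq_zero_iff_left two_ne_zero,
    angleHessian_eq_zero_iff (ellT_pos ..).ne' (heron_pos (ellT_pos ..) (hu t))]
  constructor <;> rintro ⟨h₁, h₂⟩ <;> constructor <;> linarith

end Efun

lemma SimpleGraph.Reachable.apply_eq_of_forall_adj {V α : Type*} {G : SimpleGraph V}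
    {f : V → α} (hf : ∀ i j, G.Adj i j → f i = f j) {i j : V} (h : G.Reachable i j) :
    f i = f j := by
  obtain ⟨p⟩ := h
  induction p with
  | nil => rfl
  | cons hadj _ ih => exact (hf _ _ hadj).trans ih

theorem Efun_second_derivative_nonneg_kernel_general {V T : Type*} [Fintype V] [Fintype T]
    (tv : T → V × V × V)
    (lam : V → V → ℝ) (Θ : V → ℝ)
    (u : V → ℝ)
    (htri : ∀ t : T,
      ellT lam u (tv t).1 (tv t).2.1
        < ellT lam u (tv t).2.1 (tv t).2.2 + ellT lam u (tv t).2.2 (tv t).1 ∧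
      ellT lam u (tv t).2.1 (tv t).2.2
        < ellT lam u (tv t).2.2 (tv t).1 + ellT lam u (tv t).1 (tv t).2.1 ∧
      ellT lam u (tv t).2.2 (tv t).1
        < ellT lam u (tv t).1 (tv t).2.1 + ellT lam u (tv t).2.1 (tv t).2.2) :
    (∀ w : V → ℝ, ∃ Q : ℝ,
      HasDerivAt (deriv fun s : ℝ => Efun tv lam Θ (u + s • w)) Q 0 ∧ 0 ≤ Q) ∧
    (∀ G : SimpleGraph V,
      (∀ i j, G.Adj i j ↔ i ≠ j ∧ ∃ t : T,
        (i = (tv t).1 ∨ i = (tv t).2.1 ∨ i = (tv t).2.2) ∧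
        (j = (tv t).1 ∨ j = (tv t).2.1 ∨ j = (tv t).2.2)) →
      G.Connected →
      (∀ i : V, ∃ t : T, i = (tv t).1 ∨ i = (tv t).2.1 ∨ i = (tv t).2.2) →
      ∀ (w : V → ℝ) (Q : ℝ),
        HasDerivAt (deriv fun s : ℝ => Efun tv lam Θ (u + s • w)) Q 0 →
        (Q = 0 ↔ ∃ c : ℝ, ∀ i, w i = c)) := by
  have hu : u ∈ triangleDomain tv lam := htri
  have hQ := hasDerivAt_deriv_Efun_line Θ hu
  refine ⟨fun w => ⟨_, hQ w, energyHessian_nonneg hu w⟩, ?_⟩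
  intro G hG hconn _ w Q hQw
  rw [hQw.unique (hQ w), energyHessian_eq_zero_iff hu]
  constructor
  · intro hw
    have hadj : ∀ i j, G.Adj i j → w i = w j := by
      intro i j hij
      obtain ⟨-, t, hi, hj⟩ := (hG i j).1 hij
      obtain ⟨h₁, h₂⟩ := hw t
      rcases hi with rfl | rfl | rfl <;> rcases hj with rfl | rfl | rfl <;> linarith
    obtain ⟨i₀⟩ := hconn.nonempty
    exact ⟨w i₀, fun i => (hconn.preconnected i i₀).apply_eq_of_forall_adj hadj⟩
  · rintro ⟨c, hc⟩ t
    simp [hc]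

/-- The Hessian of `E` at `u` (where all triangle inequalities hold) is
positive semidefinite; if moreover every vertex lies in a triangle and the
vertex graph of the triangulation is connected, its kernel consists exactly of
the constant functions. -/
theorem Efun_second_derivative_nonneg_kernel {V T : Type*} [Fintype V] [Fintype T]
    (tv : T → V × V × V)
    (hdist : ∀ t : T, (tv t).1 ≠ (tv t).2.1 ∧ (tv t).2.1 ≠ (tv t).2.2 ∧
      (tv t).2.2 ≠ (tv t).1)
    (lam : V → V → ℝ) (hsym : ∀ i j, lam i j = lam j i) (Θ : V → ℝ)
    (u : V → ℝ)
    (htri : ∀ t : T,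
      ellT lam u (tv t).1 (tv t).2.1
        < ellT lam u (tv t).2.1 (tv t).2.2 + ellT lam u (tv t).2.2 (tv t).1 ∧
      ellT lam u (tv t).2.1 (tv t).2.2
        < ellT lam u (tv t).2.2 (tv t).1 + ellT lam u (tv t).1 (tv t).2.1 ∧
      ellT lam u (tv t).2.2 (tv t).1
        < ellT lam u (tv t).1 (tv t).2.1 + ellT lam u (tv t).2.1 (tv t).2.2) :
    (∀ w : V → ℝ, ∃ Q : ℝ,
      HasDerivAt (deriv fun s : ℝ => Efun tv lam Θ (u + s • w)) Q 0 ∧ 0 ≤ Q) ∧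
    (∀ G : SimpleGraph V,
      (∀ i j, G.Adj i j ↔ i ≠ j ∧ ∃ t : T,
        (i = (tv t).1 ∨ i = (tv t).2.1 ∨ i = (tv t).2.2) ∧
        (j = (tv t).1 ∨ j = (tv t).2.1 ∨ j = (tv t).2.2)) →
      G.Connected →
      (∀ i : V, ∃ t : T, i = (tv t).1 ∨ i = (tv t).2.1 ∨ i = (tv t).2.2) →
      ∀ (w : V → ℝ) (Q : ℝ),
        HasDerivAt (deriv fun s : ℝ => Efun tv lam Θ (u + s • w)) Q 0 →
        (Q = 0 ↔ ∃ c : ℝ, ∀ i, w i = c)) :=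
  Efun_second_derivative_nonneg_kernel_general tv lam Θ u htri
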